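/- arXiv:1701.07430 — 3 statements merged into one kernel-verified Lean document; each statement's English description precedes it below -/
import Mathlib

section
/- Let C = (c_{ij}) be a 4×4 matrix over K with every entry nonzero. Then Π_{i=1}^4 c_{i,w(i)} = 1 for every even permutation w ∈ A_4 if and only if there exist signs ε_u, ε_v ∈ {+1, −1} and nonzero scalars a_{11}, a_{12}, a_{13}, a_{14}, a_{21}, a_{31}, a_{41} ∈ K with a_{11}·a_{12}·a_{13}·a_{14}·a_{11}·a_{21}·a_{31}·a_{41} = a_{11}⁴ such that c_{ij} = s_{ij}·a_{i1}·a_{1j}/a_{11} for all i, j, where the sign matrix S = (s_{ij}) is [[1,1,1,1],[1,ε_u,ε_v,ε_uε_v],[1,ε_v,ε_uε_v,ε_u],[1,ε_uε_v,ε_u,ε_v]]. -/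
/-! Rescaling row `i` by `C i 0` and column `j` by `C 0 j / C 0 0` multiplies every permutation
product by the same factor, so we may assume that the first row and column of `C` are `1` and
that all products along even permutations equal a common `κ`. Ten of the twelve products over
`A₄` then give `B 1 1 = B 2 3 = B 3 2`, `B 1 3 = B 2 2 = B 3 1` and `B 1 2 = B 2 1 = B 3 3`,
three values whose squares and whose product all equal `κ`; this forces `κ = 1` and the sign
pattern. Conversely, along an even permutation the sign matrix picks up an even number of
factors `εu` and an even number of factors `εv`. -/

open Matrix Finset Equiv Equiv.Perm

theorem prod_perm_mul_mul_div {α n : Type*} [DivisionCommMonoid α] [Fintype n]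
    (B : Matrix n n α) (r s : n → α) (d : α) (w : Perm n) :
    ∏ i, B i (w i) * r i * s (w i) / d =
      (∏ i, B i (w i)) * ((∏ i, r i) * (∏ i, s i) / d ^ Fintype.card n) := by
  rw [prod_div_distrib, prod_mul_distrib, prod_mul_distrib, Equiv.prod_comp w s, prod_const,
    card_univ, mul_assoc, mul_div_assoc]

theorem exists_eq_mul_mul_div_of_ne_zero {K n m : Type*} [CommGroupWithZero K]
    {C : Matrix n m K} (hC : ∀ i j, C i j ≠ 0) (i₀ : n) (j₀ : m) :
    ∃ B : Matrix n m K, (∀ i j, B i j ≠ 0) ∧ (∀ j, B i₀ j = 1) ∧ (∀ i, B i j₀ = 1) ∧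
      ∀ i j, C i j = B i j * C i j₀ * C i₀ j / C i₀ j₀ := by
  refine ⟨of fun i j => C i₀ j₀ * C i j / (C i j₀ * C i₀ j), fun i j => ?_, fun j => ?_,
    fun i => ?_, fun i j => ?_⟩ <;> simp only [of_apply]
  · exact div_ne_zero (mul_ne_zero (hC i₀ j₀) (hC i j)) (mul_ne_zero (hC i j₀) (hC i₀ j))
  · exact div_self (mul_ne_zero (hC i₀ j₀) (hC i₀ j))
  · rw [mul_comm]; exact div_self (mul_ne_zero (hC i j₀) (hC i₀ j₀))
  · field_simp [hC]

section SignMatrix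

variable {M : Type*}

def signMatrix [One M] [Mul M] (u v : M) : Matrix (Fin 4) (Fin 4) M :=
  !![1, 1, 1, 1; 1, u, v, u * v; 1, v, u * v, u; 1, u * v, u, v]

theorem signMatrix_def [One M] [Mul M] (u v : M) :
    signMatrix u v = !![1, 1, 1, 1; 1, u, v, u * v; 1, v, u * v, u; 1, u * v, u, v] := rfl

def signExpU : Matrix (Fin 4) (Fin 4) ℕ := !![0, 0, 0, 0; 0, 1, 0, 1; 0, 0, 1, 1; 0, 1, 1, 0]

def signExpV : Matrix (Fin 4) (Fin 4) ℕ := !![0, 0, 0, 0; 0, 0, 1, 1; 0, 1, 1, 0; 0, 1, 0, 1]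

theorem signMatrix_apply_eq_pow_mul_pow [CommMonoid M] (u v : M) (i j : Fin 4) :
    signMatrix u v i j = u ^ signExpU i j * v ^ signExpV i j := by
  fin_cases i <;> fin_cases j <;> simp [signMatrix, signExpU, signExpV]

theorem even_sum_signExpU {w : Perm (Fin 4)} (hw : sign w = 1) :
    Even (∑ i, signExpU i (w i)) := by
  revert w; decide

theorem even_sum_signExpV {w : Perm (Fin 4)} (hw : sign w = 1) :
    Even (∑ i, signExpV i (w i)) := by
  revert w; decide

theorem prod_signMatrix_of_sign_eq_one [CommMonoid M] {u v : M} (hu : u ^ 2 = 1) (hv : v ^ 2 = 1)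
    {w : Perm (Fin 4)} (hw : sign w = 1) : ∏ i, signMatrix u v i (w i) = 1 := by
  obtain ⟨m, hm⟩ := (even_sum_signExpU hw).two_dvd
  obtain ⟨n, hn⟩ := (even_sum_signExpV hw).two_dvd
  simp only [signMatrix_apply_eq_pow_mul_pow, prod_mul_distrib, prod_pow_eq_pow_sum, hm, hn,
    pow_mul, hu, hv, one_pow, mul_one]

theorem eq_and_eq_of_pairwise_mul_eq [CommMonoidWithZero M] [IsCancelMulZero M] {a b c κ : M}
    (ha : a ≠ 0) (hb : b ≠ 0) (hab : a * b = κ) (hac : a * c = κ) (hbc : b * c = κ) :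
    b = a ∧ c = a := by
  have hca : c = a := mul_left_cancel₀ hb (by rw [hbc, mul_comm, hab])
  exact ⟨mul_left_cancel₀ ha (by rw [hab, ← hac, hca]), hca⟩

theorem eq_one_and_eq_mul_of_mul_self_eq [CommMonoidWithZero M] [IsCancelMulZero M] {x y z κ : M}
    (hx : x ≠ 0) (hy : y ≠ 0) (hxx : x * x = κ) (hyy : y * y = κ) (hzz : z * z = κ)
    (hxyz : x * y * z = κ) : κ = 1 ∧ y = x * z := by
  have hx' : x = y * z := mul_left_cancel₀ hx (by rw [hxx, ← hxyz, mul_assoc])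
  have hy' : y = x * z := mul_left_cancel₀ hy (by rw [hyy, ← hxyz, mul_comm x y, mul_assoc])
  have hzz' : z * z = 1 := mul_left_cancel₀ hx (by rw [← mul_assoc, ← hy', ← hx', mul_one])
  exact ⟨hzz ▸ hzz', hy'⟩

theorem eq_signMatrix_of_prod_eq [CommMonoidWithZero M] [IsCancelMulZero M]
    {B : Matrix (Fin 4) (Fin 4) M} {κ : M} (hB : ∀ i j, B i j ≠ 0) (hrow : ∀ j, B 0 j = 1)
    (hcol : ∀ i, B i 0 = 1) (h : ∀ w : Perm (Fin 4), sign w = 1 → ∏ i, B i (w i) = κ) :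
    κ = 1 ∧ B 1 1 ^ 2 = 1 ∧ B 1 2 ^ 2 = 1 ∧ B = signMatrix (B 1 1) (B 1 2) := by
  have hprod (w : Perm (Fin 4)) (hw : sign w = 1) :
      B 0 (w 0) * B 1 (w 1) * B 2 (w 2) * B 3 (w 3) = κ := by
    simpa only [Fin.prod_univ_four] using h w hw
  have e0 := hprod 1 (by decide)
  have e1 := hprod (swap 0 1 * swap 2 3) (by decide)
  have e2 := hprod (swap 0 2 * swap 1 3) (by decide)
  have e3 := hprod (swap 0 3 * swap 1 2) (by decide)
  have e4 := hprod (swap 0 3 * swap 0 2) (by decide)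
  have e5 := hprod (swap 0 2 * swap 0 3) (by decide)
  have e6 := hprod (swap 0 3 * swap 0 1) (by decide)
  have e7 := hprod (swap 0 1 * swap 0 3) (by decide)
  have e8 := hprod (swap 0 2 * swap 0 1) (by decide)
  have e9 := hprod (swap 0 1 * swap 0 2) (by decide)
  simp only [Fin.isValue, Perm.coe_one, id_eq, Perm.coe_mul, Function.comp_apply, ne_eq,
    Fin.reduceEq, not_false_eq_true, swap_apply_of_ne_of_ne, swap_apply_left, swap_apply_right,
    hrow, hcol, one_mul, mul_one] at e0 e1 e2 e3 e4 e5 e6 e7 e8 e9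
  obtain ⟨h23, h32⟩ := eq_and_eq_of_pairwise_mul_eq (hB 1 1) (hB 2 3) e4 e5 e1
  obtain ⟨h22, h31⟩ := eq_and_eq_of_pairwise_mul_eq (hB 1 3) (hB 2 2) e6 e2 e7
  obtain ⟨h21, h33⟩ := eq_and_eq_of_pairwise_mul_eq (hB 1 2) (hB 2 1) e3 e8 e9
  rw [h23] at e4
  rw [h31] at e2
  rw [h21] at e3
  rw [h22, h33] at e0
  obtain ⟨rfl, h13⟩ := eq_one_and_eq_mul_of_mul_self_eq (hB 1 1) (hB 1 3) e4 e2 e3 e0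
  refine ⟨rfl, by rw [sq, e4], by rw [sq, e3], ?_⟩
  ext i j
  fin_cases i <;> fin_cases j <;> simp [signMatrix, hrow, hcol, h13, h21, h22, h23, h31, h32, h33]

end SignMatrix

theorem even_perm_products_one_iff_four_general {K : Type*} [Field K]
    (C : Matrix (Fin 4) (Fin 4) K) (hC : ∀ i j : Fin 4, C i j ≠ 0) :
    (∀ w : Equiv.Perm (Fin 4), Equiv.Perm.sign w = 1 → ∏ i, C i (w i) = 1) ↔
      ∃ εu εv a₁₁ a₁₂ a₁₃ a₁₄ a₂₁ a₃₁ a₄₁ : K,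
        (εu = 1 ∨ εu = -1) ∧ (εv = 1 ∨ εv = -1) ∧
        a₁₁ ≠ 0 ∧ a₁₂ ≠ 0 ∧ a₁₃ ≠ 0 ∧ a₁₄ ≠ 0 ∧ a₂₁ ≠ 0 ∧ a₃₁ ≠ 0 ∧ a₄₁ ≠ 0 ∧
        a₁₁ * a₁₂ * a₁₃ * a₁₄ * a₁₁ * a₂₁ * a₃₁ * a₄₁ = a₁₁ ^ 4 ∧
        ∀ i j : Fin 4,
          C i j =
            (!![1, 1, 1, 1;
                1, εu, εv, εu * εv;
                1, εv, εu * εv, εu;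
                1, εu * εv, εu, εv] : Matrix (Fin 4) (Fin 4) K) i j *
              (![a₁₁, a₂₁, a₃₁, a₄₁] i) * (![a₁₁, a₁₂, a₁₃, a₁₄] j) / a₁₁ := by
  simp only [← signMatrix_def, ← sq_eq_one_iff]
  constructor
  · intro h
    obtain ⟨B, hB, hrow, hcol, hCB⟩ := exists_eq_mul_mul_div_of_ne_zero hC 0 0
    set N := (∏ i, C i 0) * (∏ j, C 0 j) / C 0 0 ^ 4
    have hBN (w : Perm (Fin 4)) (hw : sign w = 1) : ∏ i, B i (w i) = N⁻¹ := by
      refine eq_inv_of_mul_eq_one_left ?_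
      rw [← h w hw, Fintype.prod_congr _ _ fun i => hCB i (w i), prod_perm_mul_mul_div,
        Fintype.card_fin]
    obtain ⟨hN, hu, hv, hBS⟩ := eq_signMatrix_of_prod_eq hB hrow hcol hBN
    refine ⟨B 1 1, B 1 2, C 0 0, C 0 1, C 0 2, C 0 3, C 1 0, C 2 0, C 3 0, hu, hv,
      hC 0 0, hC 0 1, hC 0 2, hC 0 3, hC 1 0, hC 2 0, hC 3 0, ?_, fun i j => ?_⟩
    · have := (div_eq_one_iff_eq (pow_ne_zero 4 (hC 0 0))).1 (inv_eq_one.1 hN)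
      simp only [Fin.prod_univ_four] at this
      linear_combination this
    · rw [← hBS, hCB i j]
      fin_cases i <;> fin_cases j <;> rfl
  · rintro ⟨εu, εv, a₁₁, a₁₂, a₁₃, a₁₄, a₂₁, a₃₁, a₄₁, hu, hv, h₁₁, -, -, -, -, -, -, hnorm,
      hCS⟩ w hw
    rw [Fintype.prod_congr _ _ fun i => hCS i (w i), prod_perm_mul_mul_div,
      prod_signMatrix_of_sign_eq_one hu hv hw, Fintype.card_fin, one_mul,
      div_eq_one_iff_eq (pow_ne_zero 4 h₁₁)]
    simp only [Fin.prod_univ_four, cons_val_zero, cons_val_one, Matrix.cons_val]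
    linear_combination hnorm

/-- characterization of `4 × 4` matrices with all entries nonzero such that
`Π_i c_{i,w(i)} = 1` for every even permutation `w ∈ A_4`. -/
theorem even_perm_products_one_iff_four {K : Type*} [Field K] [CharZero K]
    (C : Matrix (Fin 4) (Fin 4) K) (hC : ∀ i j : Fin 4, C i j ≠ 0) :
    (∀ w : Equiv.Perm (Fin 4), Equiv.Perm.sign w = 1 → ∏ i, C i (w i) = 1) ↔
      ∃ εu εv a₁₁ a₁₂ a₁₃ a₁₄ a₂₁ a₃₁ a₄₁ : K,
        (εu = 1 ∨ εu = -1) ∧ (εv = 1 ∨ εv = -1) ∧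
        a₁₁ ≠ 0 ∧ a₁₂ ≠ 0 ∧ a₁₃ ≠ 0 ∧ a₁₄ ≠ 0 ∧ a₂₁ ≠ 0 ∧ a₃₁ ≠ 0 ∧ a₄₁ ≠ 0 ∧
        a₁₁ * a₁₂ * a₁₃ * a₁₄ * a₁₁ * a₂₁ * a₃₁ * a₄₁ = a₁₁ ^ 4 ∧
        ∀ i j : Fin 4,
          C i j =
            (!![1, 1, 1, 1;
                1, εu, εv, εu * εv;
                1, εv, εu * εv, εu;
                1, εu * εv, εu, εv] : Matrix (Fin 4) (Fin 4) K) i j *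
              (![a₁₁, a₂₁, a₃₁, a₄₁] i) * (![a₁₁, a₁₂, a₁₃, a₁₄] j) / a₁₁ :=
  even_perm_products_one_iff_four_general C hC
end

section
/- Let n ≥ 2, let α, β ∈ K, let Y = (y_{ij}) be the n×n matrix of independent variables, and regard det^{(α,β)}(Y) as a polynomial in the y_{ij}. Let k₁ ≠ k₂ and l₁ ≠ l₂ be indices and let σ ∈ S_n be an even permutation with σ(k₁) = l₁ and σ(k₂) = l₂. Then the (n−2)-fold partial derivative of det^{(α,β)}(Y) with respect to the variables y_{i,σ(i)} for all i ∉ {k₁, k₂} equals α·y_{k₁l₁}·y_{k₂l₂} + β·y_{k₁l₂}·y_{k₂l₁}, i.e. the generalized determinant det^{(α,β)} of the 2×2 submatrix of Y with rows k₁, k₂ and columns l₁, l₂. -/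
/-!
Every monomial `∏ i, y_{i,τ(i)}` of `det^{(α,β)}` is squarefree, so differentiating it with respect
to the variables `y_{i,σ(i)}`, `i ∉ {k₁, k₂}`, strips those factors if `τ` agrees with `σ` off
`{k₁, k₂}` and kills it otherwise. The surviving permutations are `σ` and `(l₁ l₂) σ`, one even
and one odd, and they leave `α y_{k₁l₁} y_{k₂l₂}` and `β y_{k₁l₂} y_{k₂l₁}`.
-/

open Finset MvPolynomial

/-- The generalized determinant `det^{(α,β)}(Y)` of the matrix `Y = (y_{ij})` of independent
variables, as a polynomial in `K[y_{ij} : 1 ≤ i, j ≤ n]`. -/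
noncomputable def gdetPoly (K : Type*) [Field K] (n : ℕ) (α β : K) :
    MvPolynomial (Fin n × Fin n) K :=
  MvPolynomial.C α *
      ∑ σ ∈ Finset.univ.filter (fun σ : Equiv.Perm (Fin n) => Equiv.Perm.sign σ = 1),
        ∏ i, MvPolynomial.X (i, σ i) +
    MvPolynomial.C β *
      ∑ σ ∈ Finset.univ.filter (fun σ : Equiv.Perm (Fin n) => Equiv.Perm.sign σ = -1),
        ∏ i, MvPolynomial.X (i, σ i)

namespace Equiv.Perm

variable {α : Type*} [DecidableEq α]

theorem forall_apply_eq_self_iff_eq_one_or_eq_swap {π : Perm α} {x y : α} :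
    (∀ j, j ≠ x → j ≠ y → π j = j) ↔ π = 1 ∨ π = swap x y := by
  refine ⟨fun h => ?_, ?_⟩
  · -- `π` fixes every point outside `{x, y}`, hence maps `{x, y}` onto itself
    have hx := h (π x)
    have hy := h (π y)
    by_cases hxx : π x = x
    · left
      ext j
      have := h j
      rw [coe_one, id]
      grind [π.injective.eq_iff]
    · right
      ext j
      have := h j
      grind [π.injective.eq_iff]
  · rintro (rfl | rfl) j hx hy
    exacts [rfl, swap_apply_of_ne_of_ne hx hy]

theorem forall_apply_eq_iff_eq_or_eq_swap_mul {σ τ : Perm α} {a b : α} :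
    (∀ i, i ≠ a → i ≠ b → τ i = σ i) ↔ τ = σ ∨ τ = swap (σ a) (σ b) * σ := by
  have key : (∀ i, i ≠ a → i ≠ b → τ i = σ i) ↔
      ∀ i, σ i ≠ σ a → σ i ≠ σ b → (τ * σ⁻¹) (σ i) = σ i := by
    simp only [σ.injective.ne_iff, mul_apply, coe_inv, symm_apply_apply]
  rw [key, ← σ.surjective.forall (p := fun j => j ≠ σ a → j ≠ σ b → (τ * σ⁻¹) j = j),
    forall_apply_eq_self_iff_eq_one_or_eq_swap, mul_inv_eq_one, mul_inv_eq_iff_eq_mul]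

end Equiv.Perm

namespace MvPolynomial

variable {R σ : Type*} [CommRing R]

theorem foldr_pderiv_eq_prod_apply (vs : List σ) (p : MvPolynomial σ R) :
    vs.foldr (fun v p => pderiv v p) p =
      (vs.map fun v => (pderiv (R := R) v).toLinearMap).prod p := by
  induction vs with
  | nil => rfl
  | cons v vs ih => simp [ih, Module.End.mul_apply]

variable [DecidableEq σ]

theorem pderiv_prod_X (S : Finset σ) (v : σ) :
    pderiv v (∏ x ∈ S, X x : MvPolynomial σ R) =
      if v ∈ S then ∏ x ∈ S.erase v, X x else 0 := by
  have hvars : ∀ T : Finset σ, v ∉ T → pderiv v (∏ x ∈ T, X x : MvPolynomial σ R) = 0 := by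
    intro T hT
    nontriviality R
    refine pderiv_eq_zero_of_notMem_vars fun hv => hT ?_
    simpa using vars_prod (s := T) (fun x => (X x : MvPolynomial σ R)) hv
  split_ifs with hv
  · rw [← mul_prod_erase S _ hv, Derivation.leibniz, hvars _ (notMem_erase v S), pderiv_X_self]
    simp
  · exact hvars S hv

theorem foldr_pderiv_prod_X {vs : List σ} (hvs : vs.Nodup) (S : Finset σ) :
    vs.foldr (fun v p => pderiv v p) (∏ x ∈ S, X x : MvPolynomial σ R) =
      if vs.toFinset ⊆ S then ∏ x ∈ S \ vs.toFinset, X x else 0 := by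
  induction vs with
  | nil => simp
  | cons v vs ih =>
    obtain ⟨hv, hvs⟩ := List.nodup_cons.mp hvs
    rw [List.foldr_cons, ih hvs, apply_ite (pderiv v), map_zero, pderiv_prod_X]
    simp only [List.toFinset_cons, insert_subset_iff, sdiff_insert, mem_sdiff, List.mem_toFinset,
      hv, not_false_eq_true, and_true]
    by_cases h : vs.toFinset ⊆ S <;> simp [h]

theorem foldr_pderiv_prod_X_graph {ι α : Type*} [DecidableEq ι] [DecidableEq α]
    {L : List ι} (hL : L.Nodup) (f g : ι → α) (s : Finset ι) :
    (L.map fun i => (i, g i)).foldr (fun v p => pderiv v p)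
        (∏ i ∈ s, X (i, f i) : MvPolynomial (ι × α) R) =
      if ∀ i ∈ L, i ∈ s ∧ f i = g i then ∏ i ∈ s \ L.toFinset, X (i, f i) else 0 := by
  have hinj : ∀ h : ι → α, Function.Injective fun i => (i, h i) :=
    fun _ _ _ hij => (Prod.ext_iff.mp hij).1
  have hsub : (L.map fun i => (i, g i)).toFinset ⊆ s.image (fun i => (i, f i)) ↔
      ∀ i ∈ L, i ∈ s ∧ f i = g i := by
    simp [subset_iff]
  rw [← prod_image (hinj f).injOn, foldr_pderiv_prod_X (hL.map (hinj g))]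
  by_cases h : ∀ i ∈ L, i ∈ s ∧ f i = g i
  · rw [if_pos (hsub.mpr h), if_pos h, ← prod_image (hinj f).injOn]
    congr 1
    ext ⟨i, a⟩
    have := h i
    simp only [mem_sdiff, mem_image, List.mem_toFinset, List.mem_map, Prod.mk.injEq]
    grind
  · rw [if_neg (mt hsub.mp h), if_neg h]

end MvPolynomial

section GeneralizedDeterminant

variable {K : Type*} [Field K] {n : ℕ}

theorem gdetPoly_eq_sum (α β : K) :
    gdetPoly K n α β =
      ∑ τ : Equiv.Perm (Fin n), C (if Equiv.Perm.sign τ = 1 then α else β) * ∏ i, X (i, τ i) := by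
  simp only [gdetPoly, mul_sum, apply_ite C, ite_mul, sum_ite]
  congr 2
  ext τ
  simp [Int.units_ne_iff_eq_neg]

/-- The variables `y_{i,σ(i)}` with `i ∉ {k₁, k₂}`. -/
def permVarsOff (σ : Equiv.Perm (Fin n)) (k₁ k₂ : Fin n) : List (Fin n × Fin n) :=
  ((List.finRange n).filter fun i => !(i = k₁ ∨ i = k₂)).map fun i => (i, σ i)

theorem foldr_ite_pderiv_eq (σ : Equiv.Perm (Fin n)) (k₁ k₂ : Fin n)
    (p : MvPolynomial (Fin n × Fin n) K) :
    (List.finRange n).foldr (fun i p => if i = k₁ ∨ i = k₂ then p else pderiv (i, σ i) p) p =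
      (permVarsOff σ k₁ k₂).foldr (fun v p => pderiv v p) p := by
  rw [permVarsOff, List.foldr_map, List.foldr_filter]
  congr! 3 with i q
  by_cases h : i = k₁ ∨ i = k₂ <;> simp [h]

theorem foldr_pderiv_permVarsOff_prod_X {k₁ k₂ : Fin n} (hk : k₁ ≠ k₂)
    (σ τ : Equiv.Perm (Fin n)) :
    (permVarsOff σ k₁ k₂).foldr (fun v p => pderiv v p)
        (∏ i, X (i, τ i) : MvPolynomial (Fin n × Fin n) K) =
      if τ ∈ ({σ, Equiv.swap (σ k₁) (σ k₂) * σ} : Finset _) then X (k₁, τ k₁) * X (k₂, τ k₂)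
      else 0 := by
  have hcompl : univ \ ((List.finRange n).filter fun i => !(i = k₁ ∨ i = k₂)).toFinset =
      {k₁, k₂} := by
    ext
    simp
    tauto
  rw [permVarsOff, foldr_pderiv_prod_X_graph ((List.nodup_finRange n).filter _), hcompl,
    prod_pair hk]
  congr 1
  simp [← Equiv.Perm.forall_apply_eq_iff_eq_or_eq_swap_mul]

end GeneralizedDeterminant

theorem pderiv_gdetPoly_general {K : Type*} [Field K] {n : ℕ}
    (α β : K) (k₁ k₂ l₁ l₂ : Fin n) (hk : k₁ ≠ k₂) (hl : l₁ ≠ l₂)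
    (σ : Equiv.Perm (Fin n)) (hσ : Equiv.Perm.sign σ = 1)
    (hσ₁ : σ k₁ = l₁) (hσ₂ : σ k₂ = l₂) :
    (List.finRange n).foldr
        (fun i p => if i = k₁ ∨ i = k₂ then p else MvPolynomial.pderiv (i, σ i) p)
        (gdetPoly K n α β) =
      MvPolynomial.C α * MvPolynomial.X (k₁, l₁) * MvPolynomial.X (k₂, l₂) +
        MvPolynomial.C β * MvPolynomial.X (k₁, l₂) * MvPolynomial.X (k₂, l₁) := by
  have hswap : Equiv.Perm.sign (Equiv.swap l₁ l₂ * σ) = -1 := by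
    rw [Equiv.Perm.sign_mul, Equiv.Perm.sign_swap hl, hσ, mul_one]
  have hne : σ ≠ Equiv.swap l₁ l₂ * σ := fun h => by
    simpa [hσ, hswap] using congrArg Equiv.Perm.sign h
  rw [foldr_ite_pderiv_eq, gdetPoly_eq_sum, foldr_pderiv_eq_prod_apply, map_sum]
  simp only [C_mul', map_smul, ← foldr_pderiv_eq_prod_apply, foldr_pderiv_permVarsOff_prod_X hk,
    hσ₁, hσ₂, smul_ite, smul_zero]
  rw [sum_ite_mem, univ_inter, sum_pair hne]
  simp [hσ, hswap, hσ₁, hσ₂, smul_eq_C_mul, mul_assoc]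

/-- differentiating `det^{(α,β)}(Y)` formally with respect to the `n − 2`
variables `y_{i,σ(i)}`, `i ∉ {k₁, k₂}`, for an even permutation `σ` with `σ(k₁) = l₁` and
`σ(k₂) = l₂`, yields `α·y_{k₁l₁}·y_{k₂l₂} + β·y_{k₁l₂}·y_{k₂l₁}`, the generalized
determinant of the `2 × 2` submatrix of `Y` with rows `k₁, k₂` and columns `l₁, l₂`. -/
theorem pderiv_gdetPoly {K : Type*} [Field K] [CharZero K] {n : ℕ} (hn : 2 ≤ n)
    (α β : K) (k₁ k₂ l₁ l₂ : Fin n) (hk : k₁ ≠ k₂) (hl : l₁ ≠ l₂)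
    (σ : Equiv.Perm (Fin n)) (hσ : Equiv.Perm.sign σ = 1)
    (hσ₁ : σ k₁ = l₁) (hσ₂ : σ k₂ = l₂) :
    (List.finRange n).foldr
        (fun i p => if i = k₁ ∨ i = k₂ then p else MvPolynomial.pderiv (i, σ i) p)
        (gdetPoly K n α β) =
      MvPolynomial.C α * MvPolynomial.X (k₁, l₁) * MvPolynomial.X (k₂, l₂) +
        MvPolynomial.C β * MvPolynomial.X (k₁, l₂) * MvPolynomial.X (k₂, l₁) :=
  pderiv_gdetPoly_general α β k₁ k₂ l₁ l₂ hk hl σ hσ hσ₁ hσ₂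
end

section
/- Let n ≥ 4 and let α, β ∈ K satisfy α ≠ β and α ≠ −β. If T : Mat_n(K) → Mat_n(K) is a bijective K-linear map that stabilizes det^{(α,β)}, then for every pair (i,j), the matrix F := T(E_{ij}) satisfies F_{k₁l₁}·F_{k₂l₂} = 0 for all indices with k₁ ≠ k₂ and l₁ ≠ l₂; consequently F is the zero matrix, a matrix supported on a single row, or a matrix supported on a single column. -/
open Matrix Finset

noncomputable def evenDet {K : Type*} [Field K] {n : ℕ} (A : Matrix (Fin n) (Fin n) K) : K :=
  ∑ σ ∈ Finset.univ.filter (fun σ : Equiv.Perm (Fin n) => Equiv.Perm.sign σ = 1),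
    ∏ i, A i (σ i)

noncomputable def oddDet {K : Type*} [Field K] {n : ℕ} (A : Matrix (Fin n) (Fin n) K) : K :=
  ∑ σ ∈ Finset.univ.filter (fun σ : Equiv.Perm (Fin n) => Equiv.Perm.sign σ = -1),
    ∏ i, A i (σ i)

/-- The generalized determinant `det^{(α,β)}`. -/
noncomputable def gdet {K : Type*} [Field K] {n : ℕ} (α β : K) (A : Matrix (Fin n) (Fin n) K) : K :=
  α * evenDet A + β * oddDet A

/-- The permutation matrix `P = (δ_{i, σ(j)})`. -/
def permMat (K : Type*) [Field K] {n : ℕ} (σ : Equiv.Perm (Fin n)) : Matrix (Fin n) (Fin n) K :=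
  fun i j => if i = σ j then 1 else 0

/-!
Since `gdet` is affine in each single entry and `T` is linear and bijective, `x ↦ gdet (C + x • F)`
is affine for every `C`, where `F = T (E i j)`. Expanding `gdet` multilinearly in the rows, the
coefficient of `x²` is the sum of `gdet` over the matrices taking two rows from `F` and the rest
from `C`. For `C` the permutation matrix of `τ` with rows `k₁, k₂` deleted, only the rows `k₁, k₂`
can come from `F`, and the coefficient becomes `w(τ) P + w(τ (k₁ k₂)) Q`, where `τ kᵢ = lᵢ`,
`P = F k₁ l₁ F k₂ l₂`, `Q = F k₁ l₂ F k₂ l₁` and `w` is `α` on even and `β` on odd permutations.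
As `n ≥ 4`, `τ` can be taken of either sign, so `α P + β Q = β P + α Q = 0` and `(α² - β²) P = 0`.
-/

lemma Equiv.Perm.eq_one_or_eq_swap_of_forall_apply_eq_self {α : Type*} [DecidableEq α]
    {ρ : Equiv.Perm α} {a b : α} (hab : a ≠ b) (h : ∀ i, i ≠ a → i ≠ b → ρ i = i) :
    ρ = 1 ∨ ρ = Equiv.swap a b := by
  have hmaps : ∀ x, (x = a ∨ x = b) → ρ x = a ∨ ρ x = b := by
    intro x hx
    by_contra! hρx
    have := ρ.injective (h _ hρx.1 hρx.2)
    grind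
  have ha := hmaps a (Or.inl rfl)
  have hb := hmaps b (Or.inr rfl)
  rcases ha with ha | ha
  · refine Or.inl (Equiv.ext fun i => ?_)
    have : ρ b = b := hb.resolve_left fun h' => hab (ρ.injective (ha.trans h'.symm))
    by_cases hia : i = a
    · simp [hia, ha]
    by_cases hib : i = b
    · simp [hib, this]
    simpa using h i hia hib
  · refine Or.inr (Equiv.ext fun i => ?_)
    have : ρ b = a := hb.resolve_right fun h' => hab (ρ.injective (ha.trans h'.symm))
    by_cases hia : i = a
    · simp [hia, ha]
    by_cases hib : i = b
    · simp [hib, this]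
    rw [h i hia hib, Equiv.swap_apply_of_ne_of_ne hia hib]

lemma Equiv.Perm.exists_apply_eq_apply_eq_sign_eq {α : Type*} [Fintype α] [DecidableEq α]
    (hcard : 4 ≤ Fintype.card α) {k₁ k₂ l₁ l₂ : α} (hk : k₁ ≠ k₂) (hl : l₁ ≠ l₂) (ε : ℤˣ) :
    ∃ τ : Equiv.Perm α, τ k₁ = l₁ ∧ τ k₂ = l₂ ∧ Equiv.Perm.sign τ = ε := by
  set g := Equiv.swap k₁ l₁
  set τ₀ := Equiv.swap (g k₂) l₂ * g
  have hgk₁ : g k₁ = l₁ := Equiv.swap_apply_left _ _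
  have hτ₀k₁ : τ₀ k₁ = l₁ := by
    have : l₁ ≠ g k₂ := fun h => hk (g.injective (hgk₁.trans h))
    simp only [τ₀, Equiv.Perm.mul_apply, hgk₁, Equiv.swap_apply_of_ne_of_ne this hl]
  have hτ₀k₂ : τ₀ k₂ = l₂ := Equiv.swap_apply_left _ _
  have hfree : 1 < #(({k₁, k₂} : Finset α)ᶜ) := by
    rw [Finset.card_compl, Finset.card_pair hk]
    omega
  obtain ⟨a, ha, b, hb, hab⟩ := Finset.one_lt_card.1 hfree
  simp only [Finset.mem_compl, Finset.mem_insert, Finset.mem_singleton, not_or] at ha hb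
  by_cases hsign : Equiv.Perm.sign τ₀ = ε
  · exact ⟨τ₀, hτ₀k₁, hτ₀k₂, hsign⟩
  refine ⟨τ₀ * Equiv.swap a b, ?_, ?_, ?_⟩
  · simp [Equiv.swap_apply_of_ne_of_ne (Ne.symm ha.1) (Ne.symm hb.1), hτ₀k₁]
  · simp [Equiv.swap_apply_of_ne_of_ne (Ne.symm ha.2) (Ne.symm hb.2), hτ₀k₂]
  · rw [Equiv.Perm.sign_mul, Equiv.Perm.sign_swap hab, Int.units_ne_iff_eq_neg.1 hsign]
    simp

lemma Matrix.exists_row_or_exists_col_of_mul_eq_zero {m n R : Type*} [Nonempty m]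
    [MulZeroClass R] [NoZeroDivisors R] (F : Matrix m n R)
    (hF : ∀ k₁ k₂ l₁ l₂, k₁ ≠ k₂ → l₁ ≠ l₂ → F k₁ l₁ * F k₂ l₂ = 0) :
    (∃ i₀, ∀ k l, k ≠ i₀ → F k l = 0) ∨ (∃ j₀, ∀ k l, l ≠ j₀ → F k l = 0) := by
  by_cases hzero : ∀ k l, F k l = 0
  · exact Or.inl ⟨Classical.arbitrary m, fun k l _ => hzero k l⟩
  push Not at hzero
  obtain ⟨k₀, l₀, h₀⟩ := hzero
  have hoff : ∀ k l, k ≠ k₀ → l ≠ l₀ → F k l = 0 := fun k l hk hl =>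
    (mul_eq_zero.1 (hF k k₀ l l₀ hk hl)).resolve_right h₀
  by_cases hrow : ∃ l', l' ≠ l₀ ∧ F k₀ l' ≠ 0
  · obtain ⟨l', hl', h'⟩ := hrow
    refine Or.inl ⟨k₀, fun k l hk => ?_⟩
    by_cases hl : l = l₀
    · subst hl
      exact (mul_eq_zero.1 (hF k k₀ l l' hk hl'.symm)).resolve_right h'
    · exact hoff k l hk hl
  · push Not at hrow
    refine Or.inr ⟨l₀, fun k l hl => ?_⟩
    by_cases hk : k = k₀
    · exact hk ▸ hrow l hl
    · exact hoff k l hk hl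

lemma Polynomial.sum_filter_eq_zero_of_forall_sum_pow_mul_eq_affine {R ι : Type*} [CommRing R]
    [IsDomain R] [Infinite R] (s : Finset ι) (e : ι → ℕ) (G : ι → R) (a c : R)
    (h : ∀ x, ∑ i ∈ s, x ^ e i * G i = a + x * c) {k : ℕ} (hk : 2 ≤ k) :
    ∑ i ∈ s with e i = k, G i = 0 := by
  have hpoly : ∑ i ∈ s, Polynomial.C (G i) * Polynomial.X ^ e i
      = Polynomial.C a + Polynomial.C c * Polynomial.X :=
    Polynomial.funext fun x => by
      simp only [Polynomial.eval_finsetSum, Polynomial.eval_mul, Polynomial.eval_C,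
        Polynomial.eval_pow, Polynomial.eval_X, Polynomial.eval_add, mul_comm (G _), h, mul_comm c]
  have := congrArg (Polynomial.coeff · k) hpoly
  simp only [Polynomial.finsetSum_coeff, Polynomial.coeff_C_mul_X_pow, Polynomial.coeff_add,
    Polynomial.coeff_C, Polynomial.coeff_C_mul_X] at this
  rw [Finset.sum_filter]
  simpa [eq_comm, show k ≠ 0 by omega, show k ≠ 1 by omega] using this

section GeneralizedDeterminant

variable {K : Type*} [Field K] {n : ℕ}

noncomputable def gdetWeight (α β : K) (σ : Equiv.Perm (Fin n)) : K :=
  if Equiv.Perm.sign σ = 1 then α else β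

lemma gdet_eq_sum_gdetWeight_mul_prod (α β : K) (A : Matrix (Fin n) (Fin n) K) :
    gdet α β A = ∑ σ : Equiv.Perm (Fin n), gdetWeight α β σ * ∏ i, A i (σ i) := by
  simp only [gdetWeight, ite_mul, Finset.sum_ite, gdet, evenDet, oddDet, Finset.mul_sum,
    ← Ne.eq_def, Int.units_ne_iff_eq_neg]

noncomputable def gdetMultilinear (α β : K) : MultilinearMap K (fun _ : Fin n => Fin n → K) K :=
  ∑ σ : Equiv.Perm (Fin n), gdetWeight α β σ •
    (MultilinearMap.mkPiAlgebra K (Fin n) K).compLinearMap fun i => LinearMap.proj (σ i)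

lemma gdetMultilinear_apply (α β : K) (v : Fin n → Fin n → K) :
    gdetMultilinear α β v = ∑ σ : Equiv.Perm (Fin n), gdetWeight α β σ * ∏ i, v i (σ i) := by
  simp [gdetMultilinear]

lemma gdet_eq_gdetMultilinear (α β : K) (A : Matrix (Fin n) (Fin n) K) :
    gdet α β A = gdetMultilinear α β (fun i => A i) := by
  rw [gdet_eq_sum_gdetWeight_mul_prod, gdetMultilinear_apply]

lemma gdet_add_smul_single (α β : K) (B : Matrix (Fin n) (Fin n) K) (i j : Fin n) (x : K) :
    gdet α β (B + x • Matrix.single i j 1) = gdet α β B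
      + x * gdetMultilinear α β (Function.update (fun k => B k) i (Pi.single j 1)) := by
  have hrows : (fun k => (B + x • Matrix.single i j 1 : Matrix (Fin n) (Fin n) K) k)
      = Function.update (fun k => B k) i (B i + x • Pi.single j 1) := by
    ext k l
    by_cases hk : k = i
    · subst hk; simp [Matrix.single_apply, Pi.single_apply, eq_comm]
    · simp [hk, Ne.symm hk]
  rw [gdet_eq_gdetMultilinear, gdet_eq_gdetMultilinear, hrows, MultilinearMap.map_update_add,
    MultilinearMap.map_update_smul, Function.update_eq_self, smul_eq_mul]

lemma gdet_add_smul_eq_sum_pow_mul (α β : K) (C F : Matrix (Fin n) (Fin n) K) (x : K) :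
    gdet α β (C + x • F) = ∑ S : Finset (Fin n),
      x ^ #S * gdetMultilinear α β (S.piecewise (fun k => F k) (fun k => C k)) := by
  have hrows : (fun k => (C + x • F : Matrix (Fin n) (Fin n) K) k)
      = (fun k => x • F k) + (fun k => C k) := by
    ext k l
    simp [add_comm]
  rw [gdet_eq_gdetMultilinear, hrows, MultilinearMap.map_add_univ]
  refine Finset.sum_congr rfl fun S _ => ?_
  rw [← smul_eq_mul, ← Finset.prod_const, ← MultilinearMap.map_piecewise_smul]
  congr 1
  ext k l
  by_cases hk : k ∈ S <;> simp [hk]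

lemma gdetMultilinear_piecewise_pair (α β : K) (F : Matrix (Fin n) (Fin n) K)
    (τ : Equiv.Perm (Fin n)) {k₁ k₂ : Fin n} (hk : k₁ ≠ k₂) :
    gdetMultilinear α β (({k₁, k₂} : Finset (Fin n)).piecewise (fun k => F k)
        (fun k => Pi.single (τ k) 1))
      = gdetWeight α β τ * (F k₁ (τ k₁) * F k₂ (τ k₂))
        + gdetWeight α β (τ * Equiv.swap k₁ k₂) * (F k₁ (τ k₂) * F k₂ (τ k₁)) := by
  set v := ({k₁, k₂} : Finset (Fin n)).piecewise (fun k => F k) (fun k => Pi.single (τ k) 1)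
  have hprod : ∀ σ : Equiv.Perm (Fin n), (∀ i, i ≠ k₁ → i ≠ k₂ → σ i = τ i) →
      ∏ i, v i (σ i) = F k₁ (σ k₁) * F k₂ (σ k₂) := by
    intro σ hσ
    rw [← Finset.prod_subset (Finset.subset_univ {k₁, k₂}), Finset.prod_pair hk]
    · simp [v]
    · intro i _ hi
      simp only [Finset.mem_insert, Finset.mem_singleton, not_or] at hi
      simp [v, hi.1, hi.2, hσ i hi.1 hi.2]
  have hvanish : ∀ σ ∈ Finset.univ, σ ∉ ({τ, τ * Equiv.swap k₁ k₂} : Finset _) →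
      gdetWeight α β σ * ∏ i, v i (σ i) = 0 := by
    intro σ _ hσ
    suffices ∃ i, i ≠ k₁ ∧ i ≠ k₂ ∧ σ i ≠ τ i by
      obtain ⟨i, hi₁, hi₂, hi⟩ := this
      refine mul_eq_zero_of_right _ (Finset.prod_eq_zero (Finset.mem_univ i) ?_)
      simp [v, hi₁, hi₂, hi]
    by_contra! hagree
    have := (τ⁻¹ * σ).eq_one_or_eq_swap_of_forall_apply_eq_self hk fun i hi₁ hi₂ => by
      simp [hagree i hi₁ hi₂]
    rw [inv_mul_eq_one, inv_mul_eq_iff_eq_mul] at this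
    simp_all
  have hne : τ ≠ τ * Equiv.swap k₁ k₂ := fun h =>
    hk (by simpa using congrArg (fun σ : Equiv.Perm (Fin n) => σ k₁) h)
  rw [gdetMultilinear_apply, ← Finset.sum_subset (Finset.subset_univ _) hvanish,
    Finset.sum_pair hne, hprod τ fun _ _ _ => rfl, hprod _ fun i hi₁ hi₂ => by
      simp [Equiv.swap_apply_of_ne_of_ne hi₁ hi₂]]
  simp

def GdetAffineAlong (α β : K) (F : Matrix (Fin n) (Fin n) K) : Prop :=
  ∀ C : Matrix (Fin n) (Fin n) K, ∃ c : K, ∀ x : K, gdet α β (C + x • F) = gdet α β C + x * c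

lemma gdetAffineAlong_apply_single {α β : K}
    (T : Matrix (Fin n) (Fin n) K ≃ₗ[K] Matrix (Fin n) (Fin n) K)
    (hT : ∀ A, gdet α β (T A) = gdet α β A) (i j : Fin n) :
    GdetAffineAlong α β (T (Matrix.single i j 1)) := by
  intro C
  refine ⟨gdetMultilinear α β (Function.update (fun k => T.symm C k) i (Pi.single j 1)),
    fun x => ?_⟩
  have hline : C + x • T (Matrix.single i j 1) = T (T.symm C + x • Matrix.single i j 1) := by
    rw [map_add, map_smul, T.apply_symm_apply]
  rw [hline, hT, gdet_add_smul_single, ← hT (T.symm C), T.apply_symm_apply]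

end GeneralizedDeterminant

namespace GdetAffineAlong

variable {K : Type*} [Field K] [Infinite K] {n : ℕ} {α β : K} {F : Matrix (Fin n) (Fin n) K}

lemma gdetWeight_mul_add_gdetWeight_mul_swap_eq_zero (hF : GdetAffineAlong α β F)
    (τ : Equiv.Perm (Fin n)) {k₁ k₂ : Fin n} (hk : k₁ ≠ k₂) :
    gdetWeight α β τ * (F k₁ (τ k₁) * F k₂ (τ k₂))
      + gdetWeight α β (τ * Equiv.swap k₁ k₂) * (F k₁ (τ k₂) * F k₂ (τ k₁)) = 0 := by
  set S₀ : Finset (Fin n) := {k₁, k₂}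
  set C : Matrix (Fin n) (Fin n) K := S₀.piecewise 0 fun k => Pi.single (τ k) 1
  obtain ⟨c, hc⟩ := hF C
  have hquad := Polynomial.sum_filter_eq_zero_of_forall_sum_pow_mul_eq_affine _ _ _ _ _
    (fun x => (gdet_add_smul_eq_sum_pow_mul α β C F x).symm.trans (hc x)) le_rfl
  rw [Finset.sum_eq_single_of_mem S₀ (by simp [S₀, Finset.card_pair hk])] at hquad
  · rw [← gdetMultilinear_piecewise_pair α β F τ hk, ← hquad]
    congr 1
    exact (Finset.piecewise_idem_right _ _ _ _).symm
  · intro S hS hne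
    have hsub : ¬ S₀ ⊆ S := fun h => hne (Finset.eq_of_subset_of_card_le h
      (by simp_all [S₀, Finset.card_pair hk])).symm
    obtain ⟨r, hr₀, hr⟩ := Finset.not_subset.1 hsub
    exact MultilinearMap.map_coord_zero _ r (by simp [C, hr, hr₀])

lemma apply_mul_apply_eq_zero (hF : GdetAffineAlong α β F) (hn : 4 ≤ n) (hαβ : α ≠ β)
    (hαβ' : α ≠ -β) {k₁ k₂ l₁ l₂ : Fin n} (hk : k₁ ≠ k₂) (hl : l₁ ≠ l₂) :
    F k₁ l₁ * F k₂ l₂ = 0 := by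
  have hcard : 4 ≤ Fintype.card (Fin n) := by simpa using hn
  -- permutations of opposite signs exchange the roles of `α` and `β`
  obtain ⟨τp, hp₁, hp₂, hp⟩ := Equiv.Perm.exists_apply_eq_apply_eq_sign_eq hcard hk hl 1
  obtain ⟨τm, hm₁, hm₂, hm⟩ := Equiv.Perm.exists_apply_eq_apply_eq_sign_eq hcard hk hl (-1)
  have ep := hF.gdetWeight_mul_add_gdetWeight_mul_swap_eq_zero τp hk
  have em := hF.gdetWeight_mul_add_gdetWeight_mul_swap_eq_zero τm hk
  simp only [gdetWeight, Equiv.Perm.sign_mul, Equiv.Perm.sign_swap hk, hp, hm, hp₁, hp₂, hm₁,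
    hm₂] at ep em
  norm_num at ep em
  have h : (α - β) * (α + β) * (F k₁ l₁ * F k₂ l₂) = 0 := by
    linear_combination α * ep - β * em
  simpa [sub_ne_zero.2 hαβ, add_eq_zero_iff_eq_neg, hαβ'] using h

end GdetAffineAlong

/-- for `n ≥ 4` and `α ≠ ±β`, if `T` stabilizes `det^{(α,β)}`, then for every
`(i,j)` the matrix `F = T(E_{ij})` satisfies `F_{k₁l₁}·F_{k₂l₂} = 0` whenever `k₁ ≠ k₂` and
`l₁ ≠ l₂`; consequently `F` is the zero matrix, a matrix supported on a single row, or a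
matrix supported on a single column. -/
theorem image_of_matrix_unit_row_or_column {K : Type*} [Field K] [CharZero K]
    {n : ℕ} (hn : 4 ≤ n) (α β : K) (hαβ : α ≠ β) (hαβ' : α ≠ -β)
    (T : Matrix (Fin n) (Fin n) K ≃ₗ[K] Matrix (Fin n) (Fin n) K)
    (hT : ∀ A, gdet α β (T A) = gdet α β A) :
    ∀ i j : Fin n,
      (∀ k₁ k₂ l₁ l₂ : Fin n, k₁ ≠ k₂ → l₁ ≠ l₂ →
        T (Matrix.single i j (1 : K)) k₁ l₁ *
          T (Matrix.single i j (1 : K)) k₂ l₂ = 0) ∧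
      ((∃ i₀ : Fin n, ∀ k l : Fin n, k ≠ i₀ →
          T (Matrix.single i j (1 : K)) k l = 0) ∨
       (∃ j₀ : Fin n, ∀ k l : Fin n, l ≠ j₀ →
          T (Matrix.single i j (1 : K)) k l = 0)) := by
  intro i j
  have hprod : ∀ k₁ k₂ l₁ l₂ : Fin n, k₁ ≠ k₂ → l₁ ≠ l₂ →
      T (Matrix.single i j (1 : K)) k₁ l₁ * T (Matrix.single i j (1 : K)) k₂ l₂ = 0 :=
    fun _ _ _ _ hk hl =>
      (gdetAffineAlong_apply_single T hT i j).apply_mul_apply_eq_zero hn hαβ hαβ' hk hl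
  have : Nonempty (Fin n) := ⟨⟨0, by omega⟩⟩
  exact ⟨hprod, Matrix.exists_row_or_exists_col_of_mul_eq_zero _ hprod⟩
end
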